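/- arXiv:1510.07394 — 5 statements merged into one kernel-verified Lean document; each statement's English description precedes it below -/
import Mathlib

section
/- Let α, σ² > 0 and P_S > 0. The solution of the concave optimization problem maximize ∑_{x∈X} (1/2)·log₂(1 + P(x)/(σ² + α x²))·p(x) over nonnegative power allocations P : X → ℝ≥0 subject to ∑_{x∈X} P(x) p(x) ≤ P_S (where X is a finite set and p a probability mass function on X) is given by the water-filling allocation P*(x) = α · max{0, t² − x²}, where t > 0 is chosen so that ∑_{x∈X} α·max{0, t² − x²} p(x) = P_S. -/
/-!
Water-filling is the KKT point of a concave problem, so it is optimal by a supporting-hyperplane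
argument. With noise levels `N x = σ² + α x²` the allocation `α · max 0 (t² − x²)` equals
`max 0 (c − N x)` for the water level `c = σ² + α t²`. By concavity of `log`, the gain of any
allocation `P` over it at `x` is at most `(P x − P* x) / c`: on the support of `P*` the
tangent is taken at `N x + P* x = c`, and off it `P* x = 0` and `c ≤ N x`. Weighting by `p` and
summing, the total gain is at most `(∑ P p − ∑ P* p) / c ≤ 0` by the budget constraint.
-/

open Real Finset

lemma Real.log_sub_log_le_sub_div {x y : ℝ} (hx : 0 < x) (hy : 0 < y) :
    log y - log x ≤ (y - x) / x := by
  rw [← log_div hy.ne' hx.ne']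
  calc log (y / x) ≤ y / x - 1 := log_le_sub_one_of_pos (div_pos hy hx)
    _ = (y - x) / x := by field_simp

namespace WaterFilling

lemma log_one_add_div_sub_le {N c a : ℝ} (hN : 0 < N) (hc : 0 < c) (ha : 0 ≤ a) :
    log (1 + a / N) - log (1 + max 0 (c - N) / N) ≤ (a - max 0 (c - N)) / c := by
  have hgain : log (1 + a / N) - log (1 + max 0 (c - N) / N) ≤
      (a - max 0 (c - N)) / (N + max 0 (c - N)) := by
    refine (log_sub_log_le_sub_div (by positivity) (by positivity)).trans_eq ?_
    field_simp
    ring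
  rcases le_total c N with hcN | hNc
  · rw [max_eq_left (sub_nonpos.mpr hcN)] at hgain ⊢
    simp only [add_zero, sub_zero] at hgain ⊢
    exact hgain.trans (div_le_div_of_nonneg_left ha hc hcN)
  · rw [max_eq_right (sub_nonneg.mpr hNc)] at hgain ⊢
    rwa [add_sub_cancel] at hgain

variable {ι : Type*} {s : Finset ι} {p N P : ι → ℝ} {c : ℝ}

theorem sum_log_one_add_div_mul_le (hp : ∀ i ∈ s, 0 ≤ p i) (hN : ∀ i ∈ s, 0 < N i)
    (hc : 0 < c) (hP : ∀ i ∈ s, 0 ≤ P i)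
    (hbudget : ∑ i ∈ s, P i * p i ≤ ∑ i ∈ s, max 0 (c - N i) * p i) :
    ∑ i ∈ s, log (1 + P i / N i) * p i ≤ ∑ i ∈ s, log (1 + max 0 (c - N i) / N i) * p i := by
  rw [← sub_nonpos, ← sum_sub_distrib]
  calc ∑ i ∈ s, (log (1 + P i / N i) * p i - log (1 + max 0 (c - N i) / N i) * p i)
      ≤ ∑ i ∈ s, (P i - max 0 (c - N i)) / c * p i := by
        refine sum_le_sum fun i hi => ?_
        rw [← sub_mul]
        exact mul_le_mul_of_nonneg_right
          (log_one_add_div_sub_le (hN i hi) hc (hP i hi)) (hp i hi)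
    _ = (∑ i ∈ s, P i * p i - ∑ i ∈ s, max 0 (c - N i) * p i) / c := by
        rw [← sum_sub_distrib, sum_div]
        exact sum_congr rfl fun i _ => by ring
    _ ≤ 0 := div_nonpos_of_nonpos_of_nonneg (sub_nonpos.mpr hbudget) hc.le

end WaterFilling

theorem waterfilling_optimal_general
    (X : Finset ℝ) (p : ℝ → ℝ)
    (hp0 : ∀ x ∈ X, 0 ≤ p x)
    (α σ2 PS : ℝ) (hα : 0 < α) (hσ : 0 < σ2)
    (t : ℝ)
    (hcon : ∑ x ∈ X, α * max 0 (t ^ 2 - x ^ 2) * p x = PS)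
    (Pw : ℝ → ℝ) (hPw : ∀ x ∈ X, 0 ≤ Pw x)
    (hbudget : ∑ x ∈ X, Pw x * p x ≤ PS) :
    ∑ x ∈ X, (1 / 2) * Real.logb 2 (1 + Pw x / (σ2 + α * x ^ 2)) * p x ≤
      ∑ x ∈ X, (1 / 2) *
        Real.logb 2 (1 + α * max 0 (t ^ 2 - x ^ 2) / (σ2 + α * x ^ 2)) * p x := by
  have hlevel : ∀ x : ℝ,
      α * max 0 (t ^ 2 - x ^ 2) = max 0 ((σ2 + α * t ^ 2) - (σ2 + α * x ^ 2)) := fun x => by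
    rw [mul_max_of_nonneg _ _ hα.le]
    ring_nf
  have hscale : ∀ y q : ℝ, (1 / 2) * logb 2 y * q = (2 * log 2)⁻¹ * (log y * q) := fun y q => by
    rw [logb]
    ring
  simp_rw [hlevel] at hcon ⊢
  simp_rw [hscale, ← mul_sum]
  refine mul_le_mul_of_nonneg_left ?_ (by positivity)
  exact WaterFilling.sum_log_one_add_div_mul_le hp0 (fun x _ => by positivity) (by positivity)
    hPw (hcon ▸ hbudget)

/-- Water-filling optimality of the source power allocation (Theorem 1). -/
theorem waterfilling_optimal
    (X : Finset ℝ) (hX : X.Nonempty) (p : ℝ → ℝ)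
    (hp0 : ∀ x ∈ X, 0 ≤ p x) (hp1 : ∑ x ∈ X, p x = 1)
    (α σ2 PS : ℝ) (hα : 0 < α) (hσ : 0 < σ2) (hPS : 0 < PS)
    (t : ℝ) (ht : 0 < t)
    (hcon : ∑ x ∈ X, α * max 0 (t ^ 2 - x ^ 2) * p x = PS)
    (Pw : ℝ → ℝ) (hPw : ∀ x ∈ X, 0 ≤ Pw x)
    (hbudget : ∑ x ∈ X, Pw x * p x ≤ PS) :
    ∑ x ∈ X, (1 / 2) * Real.logb 2 (1 + Pw x / (σ2 + α * x ^ 2)) * p x ≤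
      ∑ x ∈ X, (1 / 2) *
        Real.logb 2 (1 + α * max 0 (t ^ 2 - x ^ 2) / (σ2 + α * x ^ 2)) * p x :=
  waterfilling_optimal_general X p hp0 α σ2 PS hα hσ t hcon Pw hPw hbudget
end

section
/- For a fixed probability p ∈ (0,1] and fixed α, σ² > 0, the function t ↦ ∫_{−t}^{t} log₂(1 + α(t² − x²)/(σ² + α x²)) · (1/√(2πP)) · e^{−x²/(2P)} dx is strictly increasing in t on (0, ∞) and tends to ∞ as t → ∞. -/
open Real Filter Set

/-- The source-relay mutual information under a Gaussian relay input (RHS of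
condition (39)) is strictly increasing in the threshold t and tends to ∞. -/
theorem mutual_info_increasing_in_threshold
    (P α σ2 p : ℝ) (hP : 0 < P) (hα : 0 < α) (hσ : 0 < σ2)
    (hp : p ∈ Set.Ioc (0 : ℝ) 1) :
    let I : ℝ → ℝ := fun t =>
      ∫ x in (-t)..t,
        Real.logb 2 (1 + α * (t ^ 2 - x ^ 2) / (σ2 + α * x ^ 2)) *
          ((1 / Real.sqrt (2 * π * P)) * Real.exp (-x ^ 2 / (2 * P)))
    StrictMonoOn I (Set.Ioi 0) ∧ Tendsto I atTop atTop := by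
  intro I
  -- notation
  set g : ℝ → ℝ := fun x => (1 / Real.sqrt (2 * π * P)) * Real.exp (-x ^ 2 / (2 * P)) with hg
  set A : ℝ → ℝ := fun t => σ2 + α * t ^ 2 with hA
  have hApos : ∀ x, 0 < A x := fun x => by positivity
  have hgpos : ∀ x, 0 < g x := by
    intro x
    have h2 : (0:ℝ) < Real.sqrt (2 * π * P) := Real.sqrt_pos.mpr (by positivity)
    positivity
  set F : ℝ → ℝ → ℝ := fun t x =>
    Real.logb 2 (1 + α * (t ^ 2 - x ^ 2) / (σ2 + α * x ^ 2)) * g x with hF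
  have hFeq : ∀ t x, F t x = Real.logb 2 (A t / A x) * g x := by
    intro t x
    have hx : σ2 + α * x ^ 2 ≠ 0 := (hApos x).ne'
    have h : 1 + α * (t ^ 2 - x ^ 2) / (σ2 + α * x ^ 2) = A t / A x := by
      simp only [hA]
      field_simp
      ring
    show Real.logb 2 (1 + α * (t ^ 2 - x ^ 2) / (σ2 + α * x ^ 2)) * g x = _
    rw [h]
  have hIeq : I = fun t => ∫ x in (-t)..t, F t x := rfl
  have hFcont : ∀ t, Continuous (F t) := by
    intro t
    have hAc : Continuous A := by
      simp only [hA]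
      exact continuous_const.add (continuous_const.mul (continuous_pow 2))
    have h1 : Continuous fun x : ℝ => A t / A x :=
      continuous_const.div hAc (fun x => (hApos x).ne')
    have h2 : Continuous fun x : ℝ => Real.logb 2 (A t / A x) := by
      simp only [Real.logb]
      exact (h1.log (fun x => (div_pos (hApos t) (hApos x)).ne')).div_const _
    have h3 : Continuous g := by
      apply continuous_const.mul
      exact Real.continuous_exp.comp (((continuous_pow 2).neg).div_const _)
    have := h2.mul h3
    refine this.congr fun x => ?_
    exact (hFeq t x).symm
  have hFI : ∀ t a b, IntervalIntegrable (F t) MeasureTheory.volume a b :=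
    fun t a b => (hFcont t).intervalIntegrable a b
  have hFnonneg : ∀ t x, x ^ 2 ≤ t ^ 2 → 0 ≤ F t x := by
    intro t x hx
    rw [hFeq]
    apply mul_nonneg _ (hgpos x).le
    apply Real.logb_nonneg one_lt_two
    rw [le_div_iff₀ (hApos x)]
    simp only [hA, one_mul]
    nlinarith
  -- splitting lemma: for 0 ≤ s ≤ t,
  have key : ∀ s t : ℝ, 0 ≤ s → s ≤ t → ∫ x in (-s)..s, F t x ≤ I t := by
    intro s t hs hst
    have h1 : -t ≤ -s := by linarith
    have h2 : -s ≤ s := by linarith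
    have h3 : s ≤ t := hst
    have split1 := intervalIntegral.integral_add_adjacent_intervals
      (hFI t (-t) (-s)) (hFI t (-s) t)
    have split2 := intervalIntegral.integral_add_adjacent_intervals
      (hFI t (-s) s) (hFI t s t)
    have hleft : 0 ≤ ∫ x in (-t)..(-s), F t x := by
      apply intervalIntegral.integral_nonneg h1
      intro u hu
      apply hFnonneg
      rcases hu with ⟨hu1, hu2⟩
      nlinarith
    have hright : 0 ≤ ∫ x in s..t, F t x := by
      apply intervalIntegral.integral_nonneg h3
      intro u hu
      apply hFnonneg
      rcases hu with ⟨hu1, hu2⟩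
      nlinarith
    have : I t = (∫ x in (-t)..(-s), F t x) + ((∫ x in (-s)..s, F t x) + ∫ x in s..t, F t x) := by
      rw [split2, split1, hIeq]
    linarith
  constructor
  · -- strict monotonicity
    intro s hs t ht hst
    simp only [Set.mem_Ioi] at hs ht
    have hmid : (∫ x in (-s)..s, F s x) < ∫ x in (-s)..s, F t x := by
      have hdiff : 0 < ∫ x in (-s)..s, (F t x - F s x) := by
        apply intervalIntegral.intervalIntegral_pos_of_pos_on
          ((hFI t (-s) s).sub (hFI s (-s) s))
        · intro x _
          rw [sub_pos, hFeq, hFeq]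
          apply mul_lt_mul_of_pos_right _ (hgpos x)
          apply Real.logb_lt_logb one_lt_two (div_pos (hApos s) (hApos x))
          have hAlt : A s < A t := by
            simp only [hA]
            nlinarith [mul_pos hα (mul_pos (sub_pos.mpr hst) (show (0:ℝ) < t + s by linarith))]
          exact div_lt_div_of_pos_right hAlt (hApos x)
        · linarith
      have := intervalIntegral.integral_sub (hFI t (-s) s) (hFI s (-s) s)
      rw [this] at hdiff
      linarith
    calc I s = ∫ x in (-s)..s, F s x := by rw [hIeq]
      _ < ∫ x in (-s)..s, F t x := hmid
      _ ≤ I t := key s t hs.le hst.le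
  · -- tendsto atTop
    set C : ℝ := ∫ x in (-1:ℝ)..1, g x with hC
    have hgcont : Continuous g := by
      apply continuous_const.mul
      exact Real.continuous_exp.comp (((continuous_pow 2).neg).div_const _)
    have hCpos : 0 < C := by
      apply intervalIntegral.intervalIntegral_pos_of_pos_on
        (hgcont.intervalIntegrable _ _)
      · intro x _; exact hgpos x
      · norm_num
    have hlow : ∀ t : ℝ, 1 ≤ t → Real.logb 2 (A t / A 1) * C ≤ I t := by
      intro t ht
      have h1 : Real.logb 2 (A t / A 1) * C = ∫ x in (-1:ℝ)..1, Real.logb 2 (A t / A 1) * g x := by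
        rw [intervalIntegral.integral_const_mul]
      have h2 : (∫ x in (-1:ℝ)..1, Real.logb 2 (A t / A 1) * g x) ≤ ∫ x in (-1:ℝ)..1, F t x := by
        apply intervalIntegral.integral_mono_on (by norm_num)
          ((continuous_const.mul hgcont).intervalIntegrable _ _) (hFI t _ _)
        intro x hx
        rw [hFeq]
        apply mul_le_mul_of_nonneg_right _ (hgpos x).le
        apply Real.logb_le_logb_of_le one_lt_two (div_pos (hApos t) (hApos 1))
        apply div_le_div_of_nonneg_left (hApos t).le (hApos x)
        simp only [hA]
        rcases hx with ⟨hx1, hx2⟩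
        nlinarith [mul_nonneg (by linarith : (0:ℝ) ≤ 1 - x) (by linarith : (0:ℝ) ≤ 1 + x), hα.le]
      have h3 := key 1 t zero_le_one ht
      calc Real.logb 2 (A t / A 1) * C = _ := h1
        _ ≤ ∫ x in (-1:ℝ)..1, F t x := h2
        _ ≤ I t := h3
    have hgt : Tendsto (fun t => Real.logb 2 (A t / A 1) * C) atTop atTop := by
      apply Tendsto.atTop_mul_const hCpos
      apply (Real.tendsto_logb_atTop one_lt_two).comp
      apply Tendsto.atTop_div_const (hApos 1)
      simp only [hA]
      apply tendsto_atTop_add_const_left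
      exact Tendsto.const_mul_atTop hα (tendsto_pow_atTop two_ne_zero)
    apply tendsto_atTop_mono' atTop ?_ hgt
    filter_upwards [eventually_ge_atTop (1:ℝ)] with t ht
    exact hlow t ht
end

section
/- Let α > 0 and P_S > 0 be fixed, and for each α let t(α) > 0 be the unique solution of √(2P/π)·α·t·exp(−t²/(2P)) + α·(t² − P)·erf(t/√(2P)) = P_S. Then t(α) is strictly decreasing in α and t(α) → ∞ as α → 0⁺. -/
/-!
With `F(t) = √(2P/π)·t·exp(−t²/(2P)) + (t² − P)·erf(t/√(2P))` the defining equation of `t(α)` reads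
`F(t(α)) = P_S / α`. The Gaussian terms cancel in the derivative, `F'(t) = 2t·erf(t/√(2P)) > 0` for
`t > 0`, so `F` is strictly increasing on `[0, ∞)`. As `P_S / α` strictly decreases in `α` and tends
to `∞` as `α → 0⁺`, the monotonicity of `F` transfers both properties to `t(α)`.
-/

open Real Filter Set

noncomputable def erf (x : ℝ) : ℝ :=
  (2 / Real.sqrt π) * ∫ u in (0 : ℝ)..x, Real.exp (-u ^ 2)

lemma MonotoneOn.tendsto_atTop_of_tendsto_comp {ι β γ : Type*} [LinearOrder β] [LinearOrder γ]
    [NoMaxOrder γ] {f : β → γ} {g : ι → β} {l : Filter ι} {a : β} (hf : MonotoneOn f (Ici a))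
    (hg : ∀ᶠ x in l, a ≤ g x) (hfg : Tendsto (f ∘ g) l atTop) : Tendsto g l atTop := by
  refine tendsto_atTop.2 fun M => ?_
  filter_upwards [hg, hfg.eventually_gt_atTop (f (max M a))] with x hx hfx
  by_contra! hlt
  exact (hfx.trans_le (hf hx (le_max_right M a) (hlt.le.trans (le_max_left M a)))).false

lemma hasDerivAt_erf (x : ℝ) : HasDerivAt erf (2 / √π * exp (-x ^ 2)) x := by
  have hc : Continuous fun u : ℝ => exp (-u ^ 2) := by fun_prop
  exact (intervalIntegral.integral_hasDerivAt_right (hc.intervalIntegrable 0 x)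
    (hc.stronglyMeasurableAtFilter _ _) hc.continuousAt).const_mul _

lemma erf_pos {x : ℝ} (hx : 0 < x) : 0 < erf x := by
  have hc : Continuous fun u : ℝ => exp (-u ^ 2) := by fun_prop
  exact mul_pos (by positivity)
    (intervalIntegral.intervalIntegral_pos_of_pos (hc.intervalIntegrable 0 x) (fun u => exp_pos _) hx)

/-- `E[max{0, t² − X²}]` for `X ~ N(0, P)`. -/
noncomputable def gaussianClippedPower (P t : ℝ) : ℝ :=
  √(2 * P / π) * t * exp (-t ^ 2 / (2 * P)) + (t ^ 2 - P) * erf (t / √(2 * P))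

lemma hasDerivAt_gaussianClippedPower {P : ℝ} (hP : 0 < P) (t : ℝ) :
    HasDerivAt (gaussianClippedPower P) (2 * t * erf (t / √(2 * P))) t := by
  have h2P : 0 < 2 * P := by positivity
  set s := √(2 * P) with hs
  have hs2 : s ^ 2 = 2 * P := sq_sqrt h2P.le
  have hexp : HasDerivAt (fun u : ℝ => exp (-u ^ 2 / (2 * P)))
      (exp (-t ^ 2 / (2 * P)) * (-(2 * t) / (2 * P))) t := by
    simpa using (((hasDerivAt_pow 2 t).neg).div_const (2 * P)).exp
  have herf : HasDerivAt (fun u : ℝ => erf (u / s)) (2 / √π * exp (-t ^ 2 / (2 * P)) * (1 / s)) t := by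
    have hE : -(t / s) ^ 2 = -t ^ 2 / (2 * P) := by rw [div_pow, hs2]; ring
    have h := (hasDerivAt_erf (t / s)).comp t ((hasDerivAt_id' t).div_const s)
    rwa [hE] at h
  refine ((((hasDerivAt_id' t).const_mul (√(2 * P / π))).mul hexp).add
    (((hasDerivAt_pow 2 t).sub_const P).mul herf)).congr_deriv ?_
  rw [sqrt_div h2P.le, ← hs, show P = s ^ 2 / 2 by linarith]
  field_simp
  ring

lemma gaussianClippedPower_strictMonoOn {P : ℝ} (hP : 0 < P) :
    StrictMonoOn (gaussianClippedPower P) (Ici 0) := by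
  refine strictMonoOn_of_deriv_pos (convex_Ici 0)
    (fun t _ => (hasDerivAt_gaussianClippedPower hP t).continuousAt.continuousWithinAt)
    fun t ht => ?_
  rw [interior_Ici] at ht
  rw [(hasDerivAt_gaussianClippedPower hP t).deriv]
  exact mul_pos (by linarith [ht.out]) (erf_pos (div_pos ht (sqrt_pos.2 (by positivity))))

/-- Remark 1: the amplitude threshold x_th(α) defined by the power-constraint
equation (40) is strictly decreasing in α and tends to ∞ as α → 0⁺. -/
theorem threshold_decreasing_in_alpha (P PS : ℝ) (hP : 0 < P) (hPS : 0 < PS)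
    (tα : ℝ → ℝ)
    (htα : ∀ α : ℝ, 0 < α → 0 < tα α ∧
      Real.sqrt (2 * P / π) * α * tα α * Real.exp (-(tα α) ^ 2 / (2 * P)) +
        α * ((tα α) ^ 2 - P) * erf (tα α / Real.sqrt (2 * P)) = PS) :
    StrictAntiOn tα (Set.Ioi 0) ∧
      Tendsto tα (nhdsWithin 0 (Set.Ioi 0)) atTop := by
  have hF := gaussianClippedPower_strictMonoOn hP
  have htα_nonneg (α : ℝ) (hα : α ∈ Ioi 0) : tα α ∈ Ici 0 := (htα α hα).1.le
  have hFtα (α : ℝ) (hα : α ∈ Ioi 0) : gaussianClippedPower P (tα α) = PS / α := by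
    rw [eq_div_iff (ne_of_gt hα), ← (htα α hα).2, gaussianClippedPower]
    ring
  refine ⟨fun a ha b hb hab => ?_, ?_⟩
  · refine (hF.lt_iff_lt (htα_nonneg b hb) (htα_nonneg a ha)).1 ?_
    rw [hFtα a ha, hFtα b hb]
    exact div_lt_div_of_pos_left hPS ha hab
  · refine hF.monotoneOn.tendsto_atTop_of_tendsto_comp
      (eventually_nhdsWithin_of_forall htα_nonneg) ?_
    refine (tendsto_inv_nhdsGT_zero.const_mul_atTop hPS).congr' ?_
    filter_upwards [self_mem_nhdsWithin] with α hα
    rw [Function.comp_apply, hFtα α hα, div_eq_mul_inv]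
end

section
/- For fixed σ_R² > 0, P_S > 0, P_R > 0 and with t(α) the unique positive solution of E[α·max{0, t² − X²}] = P_S for X ~ N(0, P_R), the quantity α·t(α)² satisfies: as α → 0⁺, α·t(α)² → P_S. Consequently (1/2)·log₂(1 + α·t(α)²/σ_R²) → (1/2)·log₂(1 + P_S/σ_R²) as α → 0⁺. -/
open Real Filter Set MeasureTheory

/-- As α → 0⁺, α·x_th(α)² → P_S, and hence the source-relay rate at x_R = 0
converges to the ideal full-duplex value (1/2)·log₂(1 + P_S/σ_R²). -/
theorem alpha_tth_sq_tendsto_PS (σR2 PS PR : ℝ) (hσ : 0 < σR2) (hPS : 0 < PS)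
    (hPR : 0 < PR) (tα : ℝ → ℝ)
    (htα : ∀ α : ℝ, 0 < α → 0 < tα α ∧
      (∫ x : ℝ, α * max 0 ((tα α) ^ 2 - x ^ 2) *
        ((1 / Real.sqrt (2 * π * PR)) * Real.exp (-x ^ 2 / (2 * PR)))) = PS) :
    Tendsto (fun α => α * (tα α) ^ 2) (nhdsWithin 0 (Set.Ioi 0)) (nhds PS) ∧
      Tendsto (fun α => (1 / 2) * Real.logb 2 (1 + α * (tα α) ^ 2 / σR2))
        (nhdsWithin 0 (Set.Ioi 0))
        (nhds ((1 / 2) * Real.logb 2 (1 + PS / σR2))) := by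
  have hb : (0:ℝ) < 1 / (2 * PR) := by positivity
  have hsqrt : 0 < Real.sqrt (2 * π * PR) := Real.sqrt_pos.2 (by positivity)
  set c : ℝ := 1 / Real.sqrt (2 * π * PR) with hc
  have hcpos : 0 < c := by positivity
  set φ : ℝ → ℝ := fun x => c * Real.exp (-x ^ 2 / (2 * PR)) with hφ
  have hφx : ∀ x : ℝ, c * Real.exp (-x ^ 2 / (2 * PR)) = φ x := fun _ => rfl
  simp only [hφx] at htα
  have hφeq : ∀ x : ℝ, φ x = c * Real.exp (-(1/(2*PR)) * x ^ 2) := by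
    intro x
    simp only [hφ]
    rw [show -x ^ 2 / (2 * PR) = -(1/(2*PR)) * x ^ 2 from by ring]
  have hφpos : ∀ x : ℝ, 0 < φ x := by
    intro x
    simp only [hφ]
    positivity
  have hφcont : Continuous φ := by
    simp only [hφ]; fun_prop
  have hφint : Integrable φ := by
    have := (integrable_exp_neg_mul_sq hb).const_mul c
    exact this.congr (Filter.Eventually.of_forall fun x => (hφeq x).symm)
  have hφ1 : ∫ x : ℝ, φ x = 1 := by
    simp_rw [hφeq]
    rw [integral_const_mul, integral_gaussian]
    rw [show π / (1/(2*PR)) = 2 * π * PR by field_simp]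
    rw [hc]
    field_simp
  have hx2int : Integrable (fun x : ℝ => x ^ 2 * φ x) := by
    have h2 : Integrable (fun x : ℝ => x ^ 2 * Real.exp (-(1/(2*PR)) * x ^ 2)) := by
      have := integrable_rpow_mul_exp_neg_mul_sq hb (s := 2) (by norm_num)
      simpa [Real.rpow_two] using this
    exact (h2.const_mul c).congr (Filter.Eventually.of_forall fun x => by
      simp only [hφeq]; ring)
  set C : ℝ := ∫ x : ℝ, x ^ 2 * φ x with hC
  -- key bounds
  have bounds : ∀ α : ℝ, 0 < α → PS ≤ α * (tα α) ^ 2 ∧ α * (tα α) ^ 2 ≤ PS + α * C := by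
    intro α hα
    obtain ⟨htpos, hint⟩ := htα α hα
    set t := tα α with ht
    have hmax_le : ∀ x : ℝ, max 0 (t ^ 2 - x ^ 2) ≤ t ^ 2 := fun x =>
      max_le (sq_nonneg t) (by nlinarith [sq_nonneg x])
    have hmax_nonneg : ∀ x : ℝ, 0 ≤ max 0 (t ^ 2 - x ^ 2) := fun x => le_max_left _ _
    have hconst : α * t ^ 2 = ∫ x : ℝ, α * t ^ 2 * φ x := by
      rw [integral_const_mul, hφ1, mul_one]
    have hmax_int : Integrable (fun x : ℝ => α * max 0 (t ^ 2 - x ^ 2) * φ x) := by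
      apply Integrable.mono' (hφint.const_mul (α * t ^ 2))
      · exact ((continuous_const.mul
          (continuous_const.max (continuous_const.sub (continuous_pow 2)))).mul
          hφcont).aestronglyMeasurable
      · refine Filter.Eventually.of_forall fun x => ?_
        rw [Real.norm_eq_abs, abs_of_nonneg (by positivity)]
        exact mul_le_mul_of_nonneg_right
          (mul_le_mul_of_nonneg_left (hmax_le x) hα.le) (hφpos x).le
    constructor
    · rw [← hint, hconst]
      apply integral_mono_of_nonneg
      · exact Filter.Eventually.of_forall fun x => by positivity
      · exact hφint.const_mul _
      · refine Filter.Eventually.of_forall fun x => ?_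
        dsimp only
        exact mul_le_mul_of_nonneg_right
          (mul_le_mul_of_nonneg_left (hmax_le x) hα.le) (hφpos x).le
    · have hmm : ∀ x : ℝ, t ^ 2 - max 0 (t ^ 2 - x ^ 2) = min (t ^ 2) (x ^ 2) := by
        intro x
        rcases le_total (x ^ 2) (t ^ 2) with h | h
        · rw [max_eq_right (by linarith), min_eq_right h]; ring
        · rw [max_eq_left (by linarith), min_eq_left h]; ring
      have key : α * t ^ 2 - PS = ∫ x : ℝ, α * min (t ^ 2) (x ^ 2) * φ x := by
        rw [← hint, hconst, ← integral_sub (hφint.const_mul _) hmax_int]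
        refine integral_congr_ae (Filter.Eventually.of_forall fun x => ?_)
        dsimp only
        rw [← hmm x]
        ring
      have hle : ∫ x : ℝ, α * min (t ^ 2) (x ^ 2) * φ x ≤ α * C := by
        rw [hC, ← integral_const_mul]
        apply integral_mono_of_nonneg
        · refine Filter.Eventually.of_forall fun x => ?_
          have h1 : (0:ℝ) ≤ min (t ^ 2) (x ^ 2) := le_min (sq_nonneg t) (sq_nonneg x)
          have h2 := (hφpos x).le
          positivity
        · exact hx2int.const_mul α
        · refine Filter.Eventually.of_forall fun x => ?_
          dsimp only
          rw [show α * (x ^ 2 * φ x) = α * x ^ 2 * φ x from by ring]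
          exact mul_le_mul_of_nonneg_right
            (mul_le_mul_of_nonneg_left (min_le_right _ _) hα.le) (hφpos x).le
      linarith [key ▸ hle]
  -- squeeze
  have hmain : Tendsto (fun α => α * (tα α) ^ 2) (nhdsWithin 0 (Set.Ioi 0)) (nhds PS) := by
    have hupper : Tendsto (fun α : ℝ => PS + α * C) (nhdsWithin 0 (Set.Ioi 0)) (nhds PS) := by
      have h : Tendsto (fun α : ℝ => PS + α * C) (nhds 0) (nhds (PS + 0 * C)) :=
        (continuous_const.add (continuous_id.mul continuous_const)).tendsto 0
      simpa using h.mono_left nhdsWithin_le_nhds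
    refine tendsto_of_tendsto_of_tendsto_of_le_of_le' tendsto_const_nhds hupper ?_ ?_
    · filter_upwards [self_mem_nhdsWithin] with a ha
      exact (bounds a ha).1
    · filter_upwards [self_mem_nhdsWithin] with a ha
      exact (bounds a ha).2
  refine ⟨hmain, ?_⟩
  have hne : (1 : ℝ) + PS / σR2 ≠ 0 := by positivity
  have hcont : ContinuousAt (fun y : ℝ => (1/2) * Real.logb 2 (1 + y / σR2)) PS := by
    have h0 : ContinuousAt (fun y : ℝ => 1 + y / σR2) PS := by fun_prop
    have h1 : ContinuousAt (fun y : ℝ => Real.log (1 + y / σR2)) PS := h0.log hne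
    simp only [Real.logb]
    exact continuousAt_const.mul (h1.div_const _)
  exact hcont.tendsto.comp hmain
end

section
/- Let α, σ² > 0 and P_S > 0 be fixed, and for a probability mass function p on a finite set X ⊂ ℝ with threshold t(p) defined by ∑_x α·max{0, t² − x²}·p(x) = P_S, the map p ↦ ∑_x (1/2)·log₂(1 + α·max{0, t(p)² − x²}/(σ² + αx²))·p(x) equals the value of the concave program max over P ≥ 0 of ∑_x (1/2)log₂(1 + P(x)/(σ² + αx²))p(x) subject to ∑_x P(x)p(x) ≤ P_S; in particular this map is a concave function of p. -/
open Real Finset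

/-! Water-filling is optimal because each `P ↦ gaussCapacity N P` lies below its tangent at the
water-filling power, and these tangents share the slope `1 / (2 ν log 2)` fixed by the water
level `ν`; this weak duality also bounds all rates. Concavity in `p` holds because the rate
`p x * gaussCapacity (N x) (P x)`, written in the energy `E = P x * p x`, is the perspective of
a concave function, hence jointly concave in `(p x, E)`, while the power constraint is linear
in `E`. -/

noncomputable def gaussCapacity (N P : ℝ) : ℝ := 1 / 2 * logb 2 (1 + P / N)

def achievableRates {ι : Type*} (X : Finset ι) (N : ι → ℝ) (PS : ℝ) (p : ι → ℝ) : Set ℝ :=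
  {r | ∃ P : ι → ℝ, (∀ x ∈ X, 0 ≤ P x) ∧ ∑ x ∈ X, P x * p x ≤ PS ∧
    r = ∑ x ∈ X, gaussCapacity (N x) (P x) * p x}

theorem concaveOn_gaussCapacity {N : ℝ} (hN : 0 < N) :
    ConcaveOn ℝ (Set.Ici 0) (gaussCapacity N) := by
  refine ⟨convex_Ici 0, fun u (hu : 0 ≤ u) v (hv : 0 ≤ v) a b ha hb hab => ?_⟩
  have hlog := strictConcaveOn_log_Ioi.concaveOn.2 (x := 1 + u / N) (y := 1 + v / N)
    (show 0 < 1 + u / N by positivity) (show 0 < 1 + v / N by positivity) ha hb hab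
  have hmix : a • (1 + u / N) + b • (1 + v / N) = 1 + (a • u + b • v) / N := by
    simp only [smul_eq_mul]
    field_simp
    linear_combination N * hab
  rw [hmix] at hlog
  simp only [gaussCapacity, logb, smul_eq_mul] at hlog ⊢
  calc a * (1 / 2 * (log (1 + u / N) / log 2)) + b * (1 / 2 * (log (1 + v / N) / log 2))
      = (a * log (1 + u / N) + b * log (1 + v / N)) / (2 * log 2) := by ring
    _ ≤ log (1 + (a * u + b * v) / N) / (2 * log 2) :=
        div_le_div_of_nonneg_right hlog (by positivity)
    _ = _ := by ring

theorem gaussCapacity_le_tangent {N ν P : ℝ} (hN : 0 < N) (hν : 0 < ν) (hP : 0 ≤ P) :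
    gaussCapacity N P ≤
      gaussCapacity N (max 0 (ν - N)) + (P - max 0 (ν - N)) / (2 * ν * log 2) := by
  set P₀ := max 0 (ν - N) with hP₀_def
  have hP₀ : 0 ≤ P₀ := le_max_left _ _
  have hlog : log (1 + P / N) ≤ log (1 + P₀ / N) + (P - P₀) / (N + P₀) := by
    have h := log_le_sub_one_of_pos (x := (1 + P / N) / (1 + P₀ / N)) (by positivity)
    rw [log_div (by positivity) (by positivity)] at h
    have hratio : (1 + P / N) / (1 + P₀ / N) - 1 = (P - P₀) / (N + P₀) := by
      field_simp
      ring
    linarith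
  -- the water level `N + P₀ = max N ν` is at least `ν`, with equality wherever `P₀ > 0`
  have hslope : (P - P₀) / (N + P₀) ≤ (P - P₀) / ν := by
    rcases le_total ν N with h | h
    · rw [hP₀_def, max_eq_left (by linarith), sub_zero, add_zero]
      exact div_le_div_of_nonneg_left hP hν h
    · rw [hP₀_def, max_eq_right (by linarith), add_sub_cancel]
  simp only [gaussCapacity, logb]
  calc 1 / 2 * (log (1 + P / N) / log 2) = log (1 + P / N) / (2 * log 2) := by ring
    _ ≤ (log (1 + P₀ / N) + (P - P₀) / ν) / (2 * log 2) :=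
        div_le_div_of_nonneg_right (hlog.trans (add_le_add_right hslope _)) (by positivity)
    _ = _ := by ring

theorem ConcaveOn.mul_add_mul_le_perspective {s : Set ℝ} {g : ℝ → ℝ} (hg : ConcaveOn ℝ s g)
    {a b u v : ℝ} (ha : 0 ≤ a) (hb : 0 ≤ b) (hu : u ∈ s) (hv : v ∈ s) :
    a * g u + b * g v ≤ (a + b) * g ((a * u + b * v) / (a + b)) := by
  rcases (add_nonneg ha hb).eq_or_lt with h | h
  · obtain ⟨rfl, rfl⟩ : a = 0 ∧ b = 0 := ⟨by linarith, by linarith⟩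
    simp
  have hjensen := hg.2 hu hv (div_nonneg ha h.le) (div_nonneg hb h.le) (by field_simp)
  have hmean : a / (a + b) * u + b / (a + b) * v = (a * u + b * v) / (a + b) := by ring
  simp only [smul_eq_mul, hmean] at hjensen
  calc a * g u + b * g v = (a + b) * (a / (a + b) * g u + b / (a + b) * g v) := by
        field_simp
    _ ≤ _ := mul_le_mul_of_nonneg_left hjensen h.le

theorem mul_csSup_add_mul_csSup_le {A B : Set ℝ} {s t c : ℝ} (hA : A.Nonempty)
    (hA' : BddAbove A) (hB : B.Nonempty) (hB' : BddAbove B) (hs : 0 ≤ s) (ht : 0 ≤ t)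
    (h : ∀ a ∈ A, ∀ b ∈ B, s * a + t * b ≤ c) : s * sSup A + t * sSup B ≤ c := by
  rw [← smul_eq_mul, ← smul_eq_mul, ← Real.sSup_smul_of_nonneg hs, ← Real.sSup_smul_of_nonneg ht,
    ← csSup_add hA.smul_set (hA'.smul_of_nonneg hs) hB.smul_set (hB'.smul_of_nonneg ht)]
  refine csSup_le (hA.smul_set.add hB.smul_set) ?_
  rintro _ ⟨_, ⟨a, ha, rfl⟩, _, ⟨b, hb, rfl⟩, rfl⟩
  exact h a ha b hb

namespace achievableRates

variable {ι : Type*} {X : Finset ι} {N p q : ι → ℝ} {PS : ℝ}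

theorem zero_mem (hPS : 0 ≤ PS) : 0 ∈ achievableRates X N PS p :=
  ⟨0, fun _ _ => le_rfl, by simpa using hPS, by simp [gaussCapacity]⟩

theorem le_waterFill_add (hp : ∀ x ∈ X, 0 ≤ p x) (hN : ∀ x ∈ X, 0 < N x) {ν r : ℝ} (hν : 0 < ν)
    (hr : r ∈ achievableRates X N PS p) :
    r ≤ ∑ x ∈ X, gaussCapacity (N x) (max 0 (ν - N x)) * p x +
      (PS - ∑ x ∈ X, max 0 (ν - N x) * p x) / (2 * ν * log 2) := by
  obtain ⟨P, hP, hbudget, rfl⟩ := hr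
  calc ∑ x ∈ X, gaussCapacity (N x) (P x) * p x
      ≤ ∑ x ∈ X, (gaussCapacity (N x) (max 0 (ν - N x)) +
          (P x - max 0 (ν - N x)) / (2 * ν * log 2)) * p x :=
        sum_le_sum fun x hx => mul_le_mul_of_nonneg_right
          (gaussCapacity_le_tangent (hN x hx) hν (hP x hx)) (hp x hx)
    _ = ∑ x ∈ X, gaussCapacity (N x) (max 0 (ν - N x)) * p x +
          (∑ x ∈ X, P x * p x - ∑ x ∈ X, max 0 (ν - N x) * p x) / (2 * ν * log 2) := by
        rw [← sum_sub_distrib, sum_div, ← sum_add_distrib]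
        exact sum_congr rfl fun x _ => by ring
    _ ≤ _ := by gcongr

theorem bddAbove (hp : ∀ x ∈ X, 0 ≤ p x) (hN : ∀ x ∈ X, 0 < N x) :
    BddAbove (achievableRates X N PS p) :=
  ⟨_, fun _ hr => le_waterFill_add hp hN one_pos hr⟩

theorem csSup_eq_waterFill (hp : ∀ x ∈ X, 0 ≤ p x) (hN : ∀ x ∈ X, 0 < N x) {ν : ℝ} (hν : 0 < ν)
    (hPS : ∑ x ∈ X, max 0 (ν - N x) * p x = PS) :
    sSup (achievableRates X N PS p) = ∑ x ∈ X, gaussCapacity (N x) (max 0 (ν - N x)) * p x := by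
  refine IsGreatest.csSup_eq ⟨⟨_, fun _ _ => le_max_left _ _, hPS.le, rfl⟩, fun r hr => ?_⟩
  simpa [hPS] using le_waterFill_add hp hN hν hr

theorem exists_mem_smul_add_smul_le (hp : ∀ x ∈ X, 0 ≤ p x) (hq : ∀ x ∈ X, 0 ≤ q x)
    (hN : ∀ x ∈ X, 0 < N x) {a b r₁ r₂ : ℝ} (ha : 0 ≤ a) (hb : 0 ≤ b) (hab : a + b = 1)
    (hr₁ : r₁ ∈ achievableRates X N PS p) (hr₂ : r₂ ∈ achievableRates X N PS q) :
    ∃ r ∈ achievableRates X N PS (a • p + b • q), a * r₁ + b * r₂ ≤ r := by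
  obtain ⟨P, hP, hPp, rfl⟩ := hr₁
  obtain ⟨Q, hQ, hQq, rfl⟩ := hr₂
  have hap : ∀ x ∈ X, 0 ≤ a * p x := fun x hx => mul_nonneg ha (hp x hx)
  have hbq : ∀ x ∈ X, 0 ≤ b * q x := fun x hx => mul_nonneg hb (hq x hx)
  -- the mixed allocation spends at `x` the combined energy of `P` and `Q`
  set R : ι → ℝ := fun x => (a * p x * P x + b * q x * Q x) / (a * p x + b * q x)
  have hR : ∀ x ∈ X, R x * (a * p x + b * q x) = a * p x * P x + b * q x * Q x :=
    fun x hx => div_mul_cancel_of_imp fun h => by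
      obtain ⟨h₁, h₂⟩ : a * p x = 0 ∧ b * q x = 0 := by
        constructor <;> linarith [hap x hx, hbq x hx]
      simp [h₁, h₂]
  refine ⟨_, ⟨R, fun x hx => div_nonneg ?_ (add_nonneg (hap x hx) (hbq x hx)), ?_, rfl⟩, ?_⟩
  · exact add_nonneg (mul_nonneg (hap x hx) (hP x hx)) (mul_nonneg (hbq x hx) (hQ x hx))
  · calc ∑ x ∈ X, R x * (a * p x + b * q x)
        = a * ∑ x ∈ X, P x * p x + b * ∑ x ∈ X, Q x * q x := by
          rw [sum_congr rfl hR, mul_sum, mul_sum, ← sum_add_distrib]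
          exact sum_congr rfl fun x _ => by ring
      _ ≤ a * PS + b * PS := by gcongr
      _ = PS := by rw [← add_mul, hab, one_mul]
  · calc a * ∑ x ∈ X, gaussCapacity (N x) (P x) * p x +
          b * ∑ x ∈ X, gaussCapacity (N x) (Q x) * q x
        = ∑ x ∈ X, (a * p x * gaussCapacity (N x) (P x) +
            b * q x * gaussCapacity (N x) (Q x)) := by
          rw [mul_sum, mul_sum, ← sum_add_distrib]
          exact sum_congr rfl fun x _ => by ring
      _ ≤ ∑ x ∈ X, (a * p x + b * q x) * gaussCapacity (N x) (R x) :=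
          sum_le_sum fun x hx => (concaveOn_gaussCapacity (hN x hx)).mul_add_mul_le_perspective
            (hap x hx) (hbq x hx) (hP x hx) (hQ x hx)
      _ = ∑ x ∈ X, gaussCapacity (N x) (R x) * (a * p x + b * q x) :=
          sum_congr rfl fun x _ => mul_comm _ _

theorem concaveOn_sSup (hPS : 0 ≤ PS) (hN : ∀ x ∈ X, 0 < N x) :
    ConcaveOn ℝ {p | ∀ x ∈ X, 0 ≤ p x} fun p => sSup (achievableRates X N PS p) := by
  have hconv : Convex ℝ {p : ι → ℝ | ∀ x ∈ X, 0 ≤ p x} := fun p hp q hq a b ha hb _ x hx =>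
    add_nonneg (mul_nonneg ha (hp x hx)) (mul_nonneg hb (hq x hx))
  refine ⟨hconv, fun p hp q hq a b ha hb hab => ?_⟩
  refine mul_csSup_add_mul_csSup_le ⟨0, zero_mem hPS⟩ (bddAbove hp hN) ⟨0, zero_mem hPS⟩
    (bddAbove hq hN) ha hb fun r₁ hr₁ r₂ hr₂ => ?_
  obtain ⟨r, hr, hle⟩ := exists_mem_smul_add_smul_le hp hq hN ha hb hab hr₁ hr₂
  exact hle.trans (le_csSup (bddAbove (hconv hp hq ha hb hab) hN) hr)

end achievableRates

theorem optimized_rate_concave_in_p_general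
    (X : Finset ℝ) (α σ2 PS : ℝ)
    (hα : 0 < α) (hσ : 0 < σ2) (hPS : 0 < PS) :
    let V : (ℝ → ℝ) → ℝ := fun p =>
      sSup {r : ℝ | ∃ Pw : ℝ → ℝ, (∀ x ∈ X, 0 ≤ Pw x) ∧
        (∑ x ∈ X, Pw x * p x ≤ PS) ∧
        r = ∑ x ∈ X, (1 / 2) * Real.logb 2 (1 + Pw x / (σ2 + α * x ^ 2)) * p x}
    (∀ p : ℝ → ℝ, (∀ x ∈ X, 0 ≤ p x) → (∑ x ∈ X, p x = 1) →
      ∀ t : ℝ, 0 < t → (∑ x ∈ X, α * max 0 (t ^ 2 - x ^ 2) * p x = PS) →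
        ∑ x ∈ X, (1 / 2) *
          Real.logb 2 (1 + α * max 0 (t ^ 2 - x ^ 2) / (σ2 + α * x ^ 2)) * p x
          = V p) ∧
    (∀ p q : ℝ → ℝ, (∀ x ∈ X, 0 ≤ p x) → (∑ x ∈ X, p x = 1) →
      (∀ x ∈ X, 0 ≤ q x) → (∑ x ∈ X, q x = 1) →
      ∀ θ : ℝ, θ ∈ Set.Icc (0 : ℝ) 1 →
        θ * V p + (1 - θ) * V q ≤ V (fun x => θ * p x + (1 - θ) * q x)) := by
  intro V
  have hV : ∀ p, V p = sSup (achievableRates X (fun x => σ2 + α * x ^ 2) PS p) := fun _ => rfl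
  have hN : ∀ x ∈ X, 0 < σ2 + α * x ^ 2 := fun x _ => by positivity
  simp only [hV]
  refine ⟨fun p hp _ t _ hPt => ?_, fun p q hp _ hq _ θ ⟨hθ₀, hθ₁⟩ => ?_⟩
  · have hwf : ∀ x : ℝ, α * max 0 (t ^ 2 - x ^ 2) = max 0 (σ2 + α * t ^ 2 - (σ2 + α * x ^ 2)) :=
      fun x => by rw [mul_max_of_nonneg _ _ hα.le]; ring_nf
    simp only [hwf] at hPt ⊢
    exact (achievableRates.csSup_eq_waterFill hp hN (by positivity) hPt).symm
  · exact (achievableRates.concaveOn_sSup hPS.le hN).2 hp hq hθ₀ (sub_nonneg.2 hθ₁) (by ring)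

/-- The optimized source-relay mutual information, as a function of the relay
input pmf p, equals the value of the concave water-filling program, and is a
concave function of p. -/
theorem optimized_rate_concave_in_p
    (X : Finset ℝ) (hX : X.Nonempty) (α σ2 PS : ℝ)
    (hα : 0 < α) (hσ : 0 < σ2) (hPS : 0 < PS) :
    let V : (ℝ → ℝ) → ℝ := fun p =>
      sSup {r : ℝ | ∃ Pw : ℝ → ℝ, (∀ x ∈ X, 0 ≤ Pw x) ∧
        (∑ x ∈ X, Pw x * p x ≤ PS) ∧
        r = ∑ x ∈ X, (1 / 2) * Real.logb 2 (1 + Pw x / (σ2 + α * x ^ 2)) * p x}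
    (∀ p : ℝ → ℝ, (∀ x ∈ X, 0 ≤ p x) → (∑ x ∈ X, p x = 1) →
      ∀ t : ℝ, 0 < t → (∑ x ∈ X, α * max 0 (t ^ 2 - x ^ 2) * p x = PS) →
        ∑ x ∈ X, (1 / 2) *
          Real.logb 2 (1 + α * max 0 (t ^ 2 - x ^ 2) / (σ2 + α * x ^ 2)) * p x
          = V p) ∧
    (∀ p q : ℝ → ℝ, (∀ x ∈ X, 0 ≤ p x) → (∑ x ∈ X, p x = 1) →
      (∀ x ∈ X, 0 ≤ q x) → (∑ x ∈ X, q x = 1) →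
      ∀ θ : ℝ, θ ∈ Set.Icc (0 : ℝ) 1 →
        θ * V p + (1 - θ) * V q ≤ V (fun x => θ * p x + (1 - θ) * q x)) :=
  optimized_rate_concave_in_p_general X α σ2 PS hα hσ hPS
end
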